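/- Let (C, J, P) be a geometric context and let f : F → X be a morphism of sheaves over (C, J). If X is an elementary scheme admitting an open atlas p : ∐_{i∈I} h_{U_i} → X such that for every i ∈ I the pullback F ×_X h_{U_i} is an elementary scheme, then F is an elementary scheme. -/

import Mathlib

open CategoryTheory CategoryTheory.Limits

universe u

instance sheafTypeHasCoproduct {C : Type u} [SmallCategory C] (J : GrothendieckTopology C)
    {I : Type u} (F : I → Sheaf J (Type u)) : HasColimit (Discrete.functor F) :=
  @HasColimitsOfShape.has_colimit _ _ _ _ Sheaf.instHasColimitsOfShape _

namespace GeomCtx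

variable {C : Type u} [SmallCategory C]

/-- An arrow `f` of a category is *cartesian* if pullbacks of arbitrary morphisms
along `f` exist. -/
def CartesianArrow {X Y : C} (f : X ⟶ Y) : Prop :=
  ∀ ⦃Z : C⦄ (g : Z ⟶ Y), HasPullback f g

/-- A family of arrows `(ρ i : Ui i ⟶ X)` is a `J`-covering if the sieve it
generates is a `J`-covering sieve. -/
def IsJCover (J : GrothendieckTopology C) {X : C} {I : Type u} (Ui : I → C)
    (ρ : ∀ i, Ui i ⟶ X) : Prop :=
  Sieve.generate (Presieve.ofArrows Ui ρ) ∈ J X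

/-- A Grothendieck pretopology (in the sense that does not presuppose the existence of
all pullbacks in `C`): a collection of covering families consisting of cartesian arrows,
stable under pullback, transitive, and containing the isomorphisms. -/
structure IsPretopology (Cov : ∀ U : C, Set (Presieve U)) : Prop where
  cartesian : ∀ ⦃U : C⦄, ∀ R ∈ Cov U, ∀ ⦃V : C⦄ (f : V ⟶ U), R f → CartesianArrow f
  pullback_stable : ∀ ⦃U V : C⦄ (g : V ⟶ U), ∀ R ∈ Cov U,
    ∃ S ∈ Cov V, ∀ ⦃W : C⦄ (f : W ⟶ V), S f →
      ∃ (Z : C) (r : Z ⟶ U) (h : W ⟶ Z), R r ∧ IsPullback h f r g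
  trans : ∀ ⦃U : C⦄ (R : Presieve U), R ∈ Cov U →
    ∀ (T : ∀ ⦃V : C⦄ ⦃f : V ⟶ U⦄, R f → Presieve V),
      (∀ ⦃V : C⦄ ⦃f : V ⟶ U⦄ (hf : R f), T hf ∈ Cov V) →
      R.bind T ∈ Cov U
  has_isos : ∀ ⦃U V : C⦄ (f : V ⟶ U) [IsIso f], Presieve.singleton f ∈ Cov U

/-- A Grothendieck topology is generated by a pretopology if its covering sieves are
exactly the sieves containing a sieve generated by a covering family of the pretopology. -/
def GeneratedByPretopology (J : GrothendieckTopology C) : Prop :=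
  ∃ Cov : ∀ U : C, Set (Presieve U), IsPretopology Cov ∧
    ∀ (U : C) (S : Sieve U), S ∈ J U ↔ ∃ R ∈ Cov U, Sieve.generate R ≤ S

/-- A *geometric context* `(C, J, P)`: a small category `C` with finite products, a
subcanonical Grothendieck topology `J` generated by a pretopology, and an admissible
class `P` of arrows of `C` which is `J`-local and locally cartesian, and such that `J`
is `P`-generated. -/
structure IsGeometricContext (J : GrothendieckTopology C) (P : MorphismProperty C) : Prop where
  /-- (GC1) `C` admits finite products. -/
  hasFiniteProducts : HasFiniteProducts C
  /-- (GC2a) `J` is subcanonical: every representable presheaf is a `J`-sheaf. -/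
  subcanonical : ∀ U : C, Presheaf.IsSheaf J (yoneda.obj U)
  /-- (GC2b) `J` is generated by a Grothendieck pretopology. -/
  pretopologyGenerated : GeneratedByPretopology J
  /-- (GC3a) `P` contains all identities. -/
  id_mem : ∀ U : C, P (𝟙 U)
  /-- (GC3b) `P` is stable under base change. -/
  stableUnderBaseChange : ∀ ⦃U' V' U V : C⦄ (f' : U' ⟶ V') (g' : U' ⟶ U)
    (g : V' ⟶ V) (f : U ⟶ V), IsPullback f' g' g f → P f → P f'
  /-- (GC3c) `P` is stable under composition. -/
  stableUnderComposition : ∀ ⦃U V W : C⦄ (f : U ⟶ V) (g : V ⟶ W), P f → P g → P (f ≫ g)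
  /-- (GC4) `P` is `J`-local. -/
  jLocal : ∀ ⦃U V : C⦄ (φ : U ⟶ V) ⦃I : Type u⦄ (Ui : I → C) (ρ : ∀ i, Ui i ⟶ U),
    IsJCover J Ui ρ → (∀ i, P (ρ i)) → (∀ i, P (ρ i ≫ φ)) → P φ
  /-- (GC5) `J` is `P`-generated: every `J`-covering admits a `P`-refinement. -/
  pGenerated : ∀ ⦃U : C⦄ ⦃A : Type u⦄ (Ua : A → C) (ρ : ∀ a, Ua a ⟶ U),
    IsJCover J Ua ρ → ∃ (I : Type u) (Vi : I → C) (φ : ∀ i, Vi i ⟶ U),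
      (∀ i, P (φ i)) ∧ ∀ a, ∃ (i : I) (g : Ua a ⟶ Vi i), g ≫ φ i = ρ a
  /-- (GC6) `P` is locally cartesian. -/
  locallyCartesian : ∀ ⦃U V : C⦄ (φ : U ⟶ V), P φ →
    ∃ (I : Type u) (Ui : I → C) (ρ : ∀ i, Ui i ⟶ U),
      IsJCover J Ui ρ ∧ (∀ i, P (ρ i)) ∧ ∀ i, CartesianArrow (ρ i ≫ φ)

variable (J : GrothendieckTopology C)

/-- `Subcanonicity` of `J`, phrased concretely. -/
abbrev Subcanonical : Prop := ∀ U : C, Presheaf.IsSheaf J (yoneda.obj U)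

/-- The sheaf represented by an object `U` of `C` (for a subcanonical topology). -/
def yo (hs : Subcanonical J) (U : C) : Sheaf J (Type u) :=
  ⟨yoneda.obj U, hs U⟩

/-- The morphism of representable sheaves induced by a morphism of `C`. -/
def yoMap (hs : Subcanonical J) {U V : C} (f : U ⟶ V) : yo J hs U ⟶ yo J hs V :=
  ⟨yoneda.map f⟩

/-- Two morphisms `f : A ⟶ X` and `g : B ⟶ X` of sheaves have the same image, as a
subobject of `X`: there is a common monomorphism into `X` through which both factor
epimorphically. -/
def SameImage {A B X : Sheaf J (Type u)} (f : A ⟶ X) (g : B ⟶ X) : Prop :=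
  ∃ (W : Sheaf J (Type u)) (i : W ⟶ X) (p : A ⟶ W) (q : B ⟶ W),
    Mono i ∧ Epi p ∧ Epi q ∧ p ≫ i = f ∧ q ≫ i = g

variable (P : MorphismProperty C)

/-- A morphism of sheaves `f : F ⟶ H` is an *open immersion* if for every `U : C` and
every morphism `g : h_U ⟶ H`, the projection `F ×_H h_U ⟶ h_U` is a monomorphism and
there is a family of `P`-morphisms `(Ui i ⟶ U)` such that the image of the induced
morphism `∐ h_{Ui i} ⟶ h_U` coincides, as a subobject of `h_U`, with the image of
`F ×_H h_U ⟶ h_U`. -/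
def IsOpenImmersion (hs : Subcanonical J) {F H : Sheaf J (Type u)} (f : F ⟶ H) : Prop :=
  ∀ (U : C) (g : yo J hs U ⟶ H),
    Mono (pullback.snd f g) ∧
    ∃ (I : Type u) (Ui : I → C) (ρ : ∀ i, Ui i ⟶ U),
      (∀ i, P (ρ i)) ∧
      SameImage J (Limits.Sigma.desc fun i => yoMap J hs (ρ i)) (pullback.snd f g)

/-- An *open atlas* of a sheaf `X`: a family of open immersions from representable
sheaves which is jointly epimorphic. A sheaf admitting an open atlas is an
*elementary scheme*. -/
def IsElementaryScheme (hs : Subcanonical J) (X : Sheaf J (Type u)) : Prop :=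
  ∃ (I : Type u) (Ui : I → C) (p : ∀ i, yo J hs (Ui i) ⟶ X),
    (∀ i, IsOpenImmersion J P hs (p i)) ∧ Epi (Limits.Sigma.desc p)

/-- A morphism of sheaves `f : F ⟶ H` is an *`S`-morphism* if for every `U : C` and
every `g : h_U ⟶ H` there is an open atlas `∐ h_{Ui i} ⟶ F ×_H h_U` such that each
induced composite `Ui i ⟶ U` (viewed in `C` via the Yoneda embedding) lies in `S`. -/
def IsSMorphism (hs : Subcanonical J) (S : MorphismProperty C)
    {F H : Sheaf J (Type u)} (f : F ⟶ H) : Prop :=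
  ∀ (U : C) (g : yo J hs U ⟶ H),
    ∃ (I : Type u) (Ui : I → C) (p : ∀ i, yo J hs (Ui i) ⟶ pullback f g),
      (∀ i, IsOpenImmersion J P hs (p i)) ∧ Epi (Limits.Sigma.desc p) ∧
      ∀ i, ∃ ρ : Ui i ⟶ U, yoMap J hs ρ = p i ≫ pullback.snd f g ∧ S ρ

/-- A morphism of sheaves `f : F ⟶ H` is *schematic* if for every `U : C` and every
`g : h_U ⟶ H` the pullback `F ×_H h_U` is an elementary scheme. -/
def IsSchematic (hs : Subcanonical J) {F H : Sheaf J (Type u)} (f : F ⟶ H) : Prop :=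
  ∀ (U : C) (g : yo J hs U ⟶ H), IsElementaryScheme J P hs (pullback f g)


/-! ### Auxiliary lemmas -/

section Aux

open Opposite

variable {J} (hs : Subcanonical J)

lemma yoMap_comp {U V W : C} (f : U ⟶ V) (g : V ⟶ W) :
    yoMap J hs (f ≫ g) = yoMap J hs f ≫ yoMap J hs g :=
  Sheaf.hom_ext (yoneda.map_comp f g)

/-- The sieve of arrows along which `x` locally lifts through `φ`. -/
def fSieve {A B : Sheaf J (Type u)} (φ : A ⟶ B) {U : C} (x : yo J hs U ⟶ B) : Sieve U where
  arrows V h := ∃ y : yo J hs V ⟶ A, y ≫ φ = yoMap J hs h ≫ x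
  downward_closed := by
    rintro V W h ⟨y, hy⟩ e
    exact ⟨yoMap J hs e ≫ y, by rw [Category.assoc, hy, ← Category.assoc, ← yoMap_comp]⟩

lemma fSieve_eq_imageSieve {A B : Sheaf J (Type u)} (φ : A ⟶ B) {U : C}
    (x : yo J hs U ⟶ B) :
    fSieve hs φ x = Presheaf.imageSieve φ.hom (yonedaEquiv x.hom) := by
  ext V h
  constructor
  · rintro ⟨y, hy⟩
    refine ⟨yonedaEquiv y.hom, ?_⟩
    calc φ.hom.app _ (yonedaEquiv y.hom) = yonedaEquiv (y.hom ≫ φ.hom) :=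
          (yonedaEquiv_comp _ _).symm
      _ = yonedaEquiv (yoneda.map h ≫ x.hom) := by
          exact congrArg yonedaEquiv (congrArg InducedCategory.Hom.hom hy)
      _ = B.val.map h.op (yonedaEquiv x.hom) := (yonedaEquiv_naturality _ _).symm
  · rintro ⟨t, ht⟩
    refine ⟨⟨yonedaEquiv.symm t⟩, Sheaf.hom_ext (yonedaEquiv.injective ?_)⟩
    change yonedaEquiv (yonedaEquiv.symm t ≫ φ.hom) = yonedaEquiv ((yoneda.map h) ≫ x.hom)
    rw [yonedaEquiv_comp, Equiv.apply_symm_apply]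
    exact ht.trans (yonedaEquiv_naturality _ _)

lemma epi_iff_fSieve {A B : Sheaf J (Type u)} (φ : A ⟶ B) :
    Epi φ ↔ ∀ (U : C) (x : yo J hs U ⟶ B), fSieve hs φ x ∈ J U := by
  rw [← Sheaf.isLocallySurjective_iff_epi]
  constructor
  · intro H U x
    rw [fSieve_eq_imageSieve]
    exact H.imageSieve_mem _
  · intro H
    constructor
    intro U s
    have := H U ⟨yonedaEquiv.symm s⟩
    rwa [fSieve_eq_imageSieve, Equiv.apply_symm_apply] at this

lemma mono_iff_yo {A B : Sheaf J (Type u)} (φ : A ⟶ B) :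
    Mono φ ↔ ∀ (U : C) (x y : yo J hs U ⟶ A), x ≫ φ = y ≫ φ → x = y := by
  constructor
  · intro _ U x y h
    exact (cancel_mono φ).mp h
  · intro H
    rw [Sheaf.Hom.mono_iff_presheaf_mono, NatTrans.mono_iff_mono_app]
    intro X
    rw [CategoryTheory.mono_iff_injective]
    intro a b hab
    have key := H X.unop ⟨yonedaEquiv.symm a⟩ ⟨yonedaEquiv.symm b⟩ (Sheaf.hom_ext ?_)
    · have := congrArg (fun (z : yo J hs X.unop ⟶ A) => yonedaEquiv z.hom) key
      simpa using this
    · apply yonedaEquiv.injective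
      change yonedaEquiv (yonedaEquiv.symm a ≫ φ.hom) = yonedaEquiv (yonedaEquiv.symm b ≫ φ.hom)
      rw [yonedaEquiv_comp, yonedaEquiv_comp, Equiv.apply_symm_apply, Equiv.apply_symm_apply, hab]


open GrothendieckTopology in
/-- The elementwise sieve of arrows along which a section `s` locally lifts through one of
the `p j`. -/
def eSieve {ι : Type u} {A : ι → Sheaf J (Type u)} {B : Sheaf J (Type u)} (p : ∀ j, A j ⟶ B)
    {V : Cᵒᵖ} (s : B.val.obj V) : Sieve V.unop where
  arrows W h := ∃ j, ∃ t : (A j).val.obj (op W), (p j).hom.app (op W) t = B.val.map h.op s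
  downward_closed := by
    rintro W W' h ⟨j, t, ht⟩ e
    refine ⟨j, (A j).val.map e.op t, ?_⟩
    rw [FunctorToTypes.naturality, ht, ← FunctorToTypes.map_comp_apply, ← op_comp]

lemma mem_eSieve {ι : Type u} {A : ι → Sheaf J (Type u)} {B : Sheaf J (Type u)}
    (p : ∀ j, A j ⟶ B) {V : Cᵒᵖ} (s : B.val.obj V) {W : C} (h : W ⟶ V.unop) :
    (eSieve p s).arrows h ↔
      ∃ j, ∃ t : (A j).val.obj (op W), (p j).hom.app (op W) t = B.val.map h.op s :=
  Iff.rfl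

lemma mem_fSieve {A B : Sheaf J (Type u)} (φ : A ⟶ B) {U : C} (x : yo J hs U ⟶ B)
    {V : C} (h : V ⟶ U) :
    (fSieve hs φ x).arrows h ↔ ∃ y : yo J hs V ⟶ A, y ≫ φ = yoMap J hs h ≫ x :=
  Iff.rfl

/-- The sieve of arrows along which `x` locally lifts through one of the `p j`. -/
def famSieve {ι : Type u} {A : ι → Sheaf J (Type u)} {B : Sheaf J (Type u)} (p : ∀ j, A j ⟶ B)
    {U : C} (x : yo J hs U ⟶ B) : Sieve U where
  arrows V h := ∃ j, (fSieve hs (p j) x).arrows h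
  downward_closed := by
    rintro V W h ⟨j, hj⟩ e
    exact ⟨j, (fSieve hs (p j) x).downward_closed hj e⟩

lemma mem_famSieve {ι : Type u} {A : ι → Sheaf J (Type u)} {B : Sheaf J (Type u)}
    (p : ∀ j, A j ⟶ B) {U : C} (x : yo J hs U ⟶ B) {V : C} (h : V ⟶ U) :
    (famSieve hs p x).arrows h ↔ ∃ j, (fSieve hs (p j) x).arrows h :=
  Iff.rfl

lemma famSieve_eq_eSieve {ι : Type u} {A : ι → Sheaf J (Type u)} {B : Sheaf J (Type u)}
    (p : ∀ j, A j ⟶ B) {U : C} (x : yo J hs U ⟶ B) :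
    famSieve hs p x = eSieve p (yonedaEquiv x.hom) := by
  ext V h
  rw [mem_famSieve, mem_eSieve]
  refine exists_congr fun j => ?_
  rw [fSieve_eq_imageSieve hs (p j) x]
  exact Iff.rfl

lemma eSieve_pullback {ι : Type u} {A : ι → Sheaf J (Type u)} {B : Sheaf J (Type u)}
    (p : ∀ j, A j ⟶ B) {V : Cᵒᵖ} (s : B.val.obj V) {W : C} (h : W ⟶ V.unop) :
    eSieve p (B.val.map h.op s) = (eSieve p s).pullback h := by
  ext W' h'
  rw [Sieve.pullback_apply, mem_eSieve, mem_eSieve]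
  refine exists_congr fun j => exists_congr fun t => ?_
  rw [op_comp, FunctorToTypes.map_comp_apply]

open GrothendieckTopology in
/-- The closed subpresheaf of sections locally lifting through one of the `p j`. -/
def famSub {ι : Type u} {A : ι → Sheaf J (Type u)} {B : Sheaf J (Type u)} (p : ∀ j, A j ⟶ B) :
    Subfunctor B.val where
  obj V := {s | eSieve p s ∈ J V.unop}
  map := by
    rintro U V i s hs'
    show eSieve p (B.val.map i s) ∈ J (unop V)
    have h2 : eSieve p (B.val.map i.unop.op s) = (eSieve p s).pullback i.unop :=
      eSieve_pullback p s i.unop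
    rw [show B.val.map i s = B.val.map i.unop.op s from rfl, h2]
    exact J.pullback_stable i.unop hs'

open GrothendieckTopology in
lemma mem_famSub {ι : Type u} {A : ι → Sheaf J (Type u)} {B : Sheaf J (Type u)}
    (p : ∀ j, A j ⟶ B) {V : Cᵒᵖ} (s : B.val.obj V) :
    s ∈ (famSub p).obj V ↔ eSieve p s ∈ J V.unop :=
  Iff.rfl

open GrothendieckTopology in
lemma famSub_isSheaf {ι : Type u} {A : ι → Sheaf J (Type u)} {B : Sheaf J (Type u)}
    (p : ∀ j, A j ⟶ B) : Presieve.IsSheaf J (famSub p).toFunctor := by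
  refine (Subfunctor.isSheaf_iff (G := famSub p) ((isSheaf_iff_isSheaf_of_type _ _).mp B.cond)).mpr ?_
  intro U s hsieve
  rw [mem_famSub]
  refine J.transitive hsieve _ ?_
  intro W h hh
  have hh' : eSieve p (B.val.map h.op s) ∈ J W := hh
  rwa [eSieve_pullback p s h] at hh'

open GrothendieckTopology in
/-- The subsheaf of sections locally lifting through one of the `p j`. -/
def famSheaf {ι : Type u} {A : ι → Sheaf J (Type u)} {B : Sheaf J (Type u)} (p : ∀ j, A j ⟶ B) :
    Sheaf J (Type u) :=
  ⟨(famSub p).toFunctor, (isSheaf_iff_isSheaf_of_type _ _).mpr (famSub_isSheaf p)⟩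

open GrothendieckTopology in
def famι {ι : Type u} {A : ι → Sheaf J (Type u)} {B : Sheaf J (Type u)} (p : ∀ j, A j ⟶ B) :
    famSheaf p ⟶ B :=
  ⟨(famSub p).ι⟩

open GrothendieckTopology in
instance famι_mono {ι : Type u} {A : ι → Sheaf J (Type u)} {B : Sheaf J (Type u)}
    (p : ∀ j, A j ⟶ B) : Mono (famι p) :=
  (Sheaf.Hom.mono_iff_presheaf_mono _ _ _).mpr (show Mono (famSub p).ι from inferInstance)

open GrothendieckTopology in
def famLift {ι : Type u} {A : ι → Sheaf J (Type u)} {B : Sheaf J (Type u)} (p : ∀ j, A j ⟶ B)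
    (j : ι) : A j ⟶ famSheaf p :=
  ⟨Subfunctor.lift (G := famSub p) (p j).hom (by
    rintro V _ ⟨a, rfl⟩
    rw [mem_famSub]
    refine J.superset_covering ?_ (J.top_mem V.unop)
    rintro W h -
    exact ⟨j, (A j).val.map h.op a, (FunctorToTypes.naturality (p j).hom h.op a)⟩)⟩

open GrothendieckTopology in
lemma famLift_ι {ι : Type u} {A : ι → Sheaf J (Type u)} {B : Sheaf J (Type u)}
    (p : ∀ j, A j ⟶ B) (j : ι) : famLift p j ≫ famι p = p j :=
  Sheaf.hom_ext rfl

lemma epi_desc_iff_famSieve {ι : Type u} {A : ι → Sheaf J (Type u)} {B : Sheaf J (Type u)}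
    (p : ∀ j, A j ⟶ B) :
    Epi (Limits.Sigma.desc p) ↔ ∀ (U : C) (x : yo J hs U ⟶ B), famSieve hs p x ∈ J U := by
  constructor
  · intro hepi U x
    have hfac : Limits.Sigma.desc p = Limits.Sigma.desc (famLift p) ≫ famι p := by
      ext j
      simp [famLift_ι]
    rw [hfac] at hepi
    have hι : Epi (famι p) := @epi_of_epi _ _ _ _ _ _ _ hepi
    have hx := (epi_iff_fSieve hs (famι p)).mp hι U x
    rw [famSieve_eq_eSieve]
    refine J.transitive hx _ ?_
    intro V h hh
    obtain ⟨y, hy⟩ := hh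
    have key : (famSub p).ι.app (op V) (yonedaEquiv y.hom) =
        B.val.map h.op (yonedaEquiv x.hom) := by
      calc (famSub p).ι.app (op V) (yonedaEquiv y.hom)
          = yonedaEquiv (y.hom ≫ (famSub p).ι) := (yonedaEquiv_comp _ _).symm
        _ = yonedaEquiv (yoneda.map h ≫ x.hom) := by
            exact congrArg yonedaEquiv (congrArg InducedCategory.Hom.hom hy)
        _ = B.val.map h.op (yonedaEquiv x.hom) := (yonedaEquiv_naturality _ _).symm
    have hmem : eSieve p (B.val.map h.op (yonedaEquiv x.hom)) ∈ J V := by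
      rw [← key]
      exact (yonedaEquiv y.hom).2
    rwa [eSieve_pullback] at hmem
  · intro H
    rw [epi_iff_fSieve hs]
    intro U x
    refine J.superset_covering ?_ (H U x)
    rintro V h ⟨j, y, hy⟩
    exact ⟨y ≫ Limits.Sigma.ι A j, by rw [Category.assoc, Limits.Sigma.ι_desc, hy]⟩

lemma fSieve_pullback {A B : Sheaf J (Type u)} (φ : A ⟶ B) {U : C} (x : yo J hs U ⟶ B)
    {V : C} (e : V ⟶ U) :
    (fSieve hs φ x).pullback e = fSieve hs φ (yoMap J hs e ≫ x) := by
  ext W h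
  rw [Sieve.pullback_apply, mem_fSieve, mem_fSieve]
  refine exists_congr fun y => ?_
  rw [yoMap_comp, Category.assoc]

lemma fSieve_comp_le {A B X : Sheaf J (Type u)} (q : A ⟶ B) (m : B ⟶ X) {U : C}
    (x : yo J hs U ⟶ X) : fSieve hs (q ≫ m) x ≤ fSieve hs m x := by
  rintro V h ⟨y, hy⟩
  exact ⟨y ≫ q, by rw [Category.assoc, hy]⟩

lemma fSieve_comp_cancel {A B X : Sheaf J (Type u)} (q : A ⟶ B) (m : B ⟶ X) [Mono m] {U : C}
    (t : yo J hs U ⟶ B) : fSieve hs (q ≫ m) (t ≫ m) = fSieve hs q t := by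
  ext V h
  rw [mem_fSieve, mem_fSieve]
  refine exists_congr fun y => ?_
  constructor
  · intro hy
    apply (cancel_mono m).mp
    rw [Category.assoc, hy, Category.assoc]
  · intro hy
    rw [← Category.assoc, hy, Category.assoc]

lemma fSieve_snd {A B G' : Sheaf J (Type u)} (f : A ⟶ B) (g : G' ⟶ B) {U : C}
    (x : yo J hs U ⟶ G') :
    fSieve hs (pullback.snd f g) x = fSieve hs f (x ≫ g) := by
  ext V h
  rw [mem_fSieve, mem_fSieve]
  constructor
  · rintro ⟨y, hy⟩
    refine ⟨y ≫ pullback.fst f g, ?_⟩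
    rw [Category.assoc, pullback.condition, ← Category.assoc, hy, Category.assoc]
  · rintro ⟨z, hz⟩
    refine ⟨pullback.lift z (yoMap J hs h ≫ x) (by rw [hz, Category.assoc]), ?_⟩
    rw [pullback.lift_snd]

lemma fSieve_fst {A B G' : Sheaf J (Type u)} (f : A ⟶ B) (g : G' ⟶ B) {U : C}
    (x : yo J hs U ⟶ A) :
    fSieve hs (pullback.fst f g) x = fSieve hs g (x ≫ f) := by
  ext V h
  rw [mem_fSieve, mem_fSieve]
  constructor
  · rintro ⟨y, hy⟩
    refine ⟨y ≫ pullback.snd f g, ?_⟩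
    rw [Category.assoc, ← pullback.condition, ← Category.assoc, hy, Category.assoc]
  · rintro ⟨z, hz⟩
    refine ⟨pullback.lift (yoMap J hs h ≫ x) z (by rw [hz, Category.assoc]), ?_⟩
    rw [pullback.lift_fst]

open GrothendieckTopology in
lemma factor_through_mono {A B : Sheaf J (Type u)} (m : A ⟶ B) [Mono m] {U : C}
    (t : yo J hs U ⟶ B) (ht : fSieve hs m t ∈ J U) : ∃ s : yo J hs U ⟶ A, s ≫ m = t := by
  have hmv : Mono m.hom := (Sheaf.Hom.mono_iff_presheaf_mono _ _ _).mp inferInstance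
  have himg : Presieve.IsSheaf J (Subfunctor.range m.hom).toFunctor :=
    Presieve.isSheaf_iso J (asIso (Subfunctor.toRange m.hom))
      ((isSheaf_iff_isSheaf_of_type _ _).mp A.cond)
  have heq : Subfunctor.range m.hom = (Subfunctor.range m.hom).sheafify J :=
    Subfunctor.eq_sheafify (G := Subfunctor.range m.hom) ((isSheaf_iff_isSheaf_of_type _ _).mp B.cond) himg
  have hmem : yonedaEquiv t.hom ∈ ((Subfunctor.range m.hom).sheafify J).obj (op U) := by
    show (Subfunctor.range m.hom).sieveOfSection (yonedaEquiv t.hom) ∈ J U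
    rw [fSieve_eq_imageSieve] at ht
    exact ht
  rw [← heq] at hmem
  obtain ⟨a, ha⟩ := hmem
  refine ⟨⟨yonedaEquiv.symm a⟩, Sheaf.hom_ext (yonedaEquiv.injective ?_)⟩
  show CategoryTheory.yonedaEquiv (CategoryTheory.yonedaEquiv.symm a ≫ m.hom) =
    CategoryTheory.yonedaEquiv t.hom
  rw [CategoryTheory.yonedaEquiv_comp, Equiv.apply_symm_apply]
  exact ha

lemma fSieve_epi_comp {A W B : Sheaf J (Type u)} (pp : A ⟶ W) (i : W ⟶ B) [Epi pp] {U : C}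
    (x : yo J hs U ⟶ B) : fSieve hs (pp ≫ i) x ∈ J U ↔ fSieve hs i x ∈ J U := by
  constructor
  · intro h
    exact J.superset_covering (fSieve_comp_le hs pp i x) h
  · intro h
    refine J.transitive h _ ?_
    intro V e he
    obtain ⟨w, hw⟩ := he
    have hp := (epi_iff_fSieve hs pp).mp ‹Epi pp› V w
    refine J.superset_covering ?_ hp
    rintro W' e' ⟨y, hy⟩
    rw [fSieve_pullback, mem_fSieve]
    refine ⟨y, ?_⟩
    rw [← Category.assoc, hy, Category.assoc, hw, ← Category.assoc]

lemma epi_of_fSieve_comp_mono {B W X : Sheaf J (Type u)} (e : B ⟶ W) (i : W ⟶ X) [Mono i]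
    (H : ∀ (U : C) (x : yo J hs U ⟶ W), fSieve hs (e ≫ i) (x ≫ i) ∈ J U) : Epi e := by
  rw [epi_iff_fSieve hs]
  intro U x
  refine J.superset_covering ?_ (H U x)
  rintro V h ⟨y, hy⟩
  refine ⟨y, (cancel_mono i).mp ?_⟩
  rw [Category.assoc, hy, Category.assoc]

open GrothendieckTopology in
lemma punit_famSieve_mem {B X : Sheaf J (Type u)} (f : B ⟶ X) {U : C}
    (x : yo J hs U ⟶ famSheaf (fun _ : PUnit.{u+1} => f)) :
    famSieve hs (fun _ : PUnit.{u+1} => f) (x ≫ famι _) ∈ J U := by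
  rw [famSieve_eq_eSieve]
  have h1 : yonedaEquiv ((x ≫ famι (fun _ : PUnit.{u+1} => f)).hom) =
      ((yonedaEquiv x.hom : ((famSub (fun _ : PUnit.{u+1} => f)).toFunctor.obj (op U)))).1 := by
    show CategoryTheory.yonedaEquiv (x.hom ≫ (famSub _).ι) = _
    erw [CategoryTheory.yonedaEquiv_comp]
    rfl
  rw [h1]
  exact (yonedaEquiv x.hom).2

open GrothendieckTopology in
lemma sameImage_iff {A B X : Sheaf J (Type u)} (f : A ⟶ X) (g : B ⟶ X) :
    SameImage J f g ↔
      ∀ (U : C) (x : yo J hs U ⟶ X), (fSieve hs f x ∈ J U ↔ fSieve hs g x ∈ J U) := by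
  constructor
  · rintro ⟨W, i, pp, qq, hmono, hep, heq, hf, hg⟩ U x
    haveI := hep
    haveI := heq
    have h1 := fSieve_epi_comp hs pp i x
    have h2 := fSieve_epi_comp hs qq i x
    rw [hf] at h1
    rw [hg] at h2
    exact h1.trans h2.symm
  · intro H
    set p : PUnit.{u+1} → (A ⟶ X) := fun _ => f with hp
    -- the map from B into the subsheaf
    have hq : ∀ (V : Cᵒᵖ) (b : B.val.obj V), g.hom.app V b ∈ (famSub p).obj V := by
      intro V b
      rw [mem_famSub]
      have hxs : fSieve hs g (⟨yonedaEquiv.symm (g.hom.app V b)⟩ : yo J hs V.unop ⟶ X) ∈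
          J V.unop := by
        have : (fSieve hs g ⟨yonedaEquiv.symm (g.hom.app V b)⟩).arrows (𝟙 V.unop) := by
          rw [mem_fSieve]
          refine ⟨⟨yonedaEquiv.symm b⟩, Sheaf.hom_ext (yonedaEquiv.injective ?_)⟩
          show yonedaEquiv (yonedaEquiv.symm b ≫ g.hom) = yonedaEquiv
            (yoneda.map (𝟙 V.unop) ≫ yonedaEquiv.symm (g.hom.app V b))
          rw [CategoryTheory.yonedaEquiv_comp, Equiv.apply_symm_apply,
            ← CategoryTheory.yonedaEquiv_naturality,
            Equiv.apply_symm_apply, op_id, FunctorToTypes.map_id_apply]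
        rw [Sieve.id_mem_iff_eq_top.mp this]
        exact J.top_mem _
      have hxf := (H V.unop ⟨yonedaEquiv.symm (g.hom.app V b)⟩).mpr hxs
      have hfam : famSieve hs p (⟨yonedaEquiv.symm (g.hom.app V b)⟩ : yo J hs V.unop ⟶ X) ∈
          J V.unop := by
        refine J.superset_covering ?_ hxf
        rintro V' h hh
        exact ⟨PUnit.unit, hh⟩
      rw [famSieve_eq_eSieve] at hfam
      have this := hfam
      have harg : (yonedaEquiv ((⟨yonedaEquiv.symm (g.hom.app V b)⟩ :
          yo J hs V.unop ⟶ X).hom)) = g.hom.app V b := Equiv.apply_symm_apply _ _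
      rwa [harg] at this
    refine ⟨famSheaf p, famι p, famLift p PUnit.unit, ⟨Subfunctor.lift (G := famSub p) g.hom (by rintro V _ ⟨b, rfl⟩; exact hq V b)⟩,
      inferInstance, ?_, ?_, famLift_ι p PUnit.unit, Sheaf.hom_ext rfl⟩
    · refine epi_of_fSieve_comp_mono hs _ (famι p) ?_
      intro U x
      rw [famLift_ι]
      refine J.superset_covering ?_ (punit_famSieve_mem hs f x)
      rintro V h ⟨j, hj⟩
      exact hj
    · refine epi_of_fSieve_comp_mono hs _ (famι p) ?_
      intro U x
      rw [show (⟨Subfunctor.lift (G := famSub p) g.hom (by rintro V _ ⟨b, rfl⟩; exact hq V b)⟩ : B ⟶ famSheaf p) ≫ famι p = g from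
        Sheaf.hom_ext rfl]
      refine (H U (x ≫ famι p)).mp ?_
      refine J.superset_covering ?_ (punit_famSieve_mem hs f x)
      rintro V h ⟨j, hj⟩
      exact hj

lemma fSieve_desc_iff {ι : Type u} {A : ι → Sheaf J (Type u)} {B : Sheaf J (Type u)}
    (p : ∀ j, A j ⟶ B) {U : C} (x : yo J hs U ⟶ B) :
    fSieve hs (Limits.Sigma.desc p) x ∈ J U ↔ famSieve hs p x ∈ J U := by
  constructor
  · intro hx
    have hfac : Limits.Sigma.desc p = Limits.Sigma.desc (famLift p) ≫ famι p := by
      ext j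
      simp [famLift_ι]
    have hx' : fSieve hs (famι p) x ∈ J U := by
      refine J.superset_covering ?_ hx
      rw [hfac]
      exact fSieve_comp_le hs _ _ x
    rw [famSieve_eq_eSieve]
    refine J.transitive hx' _ ?_
    intro V h hh
    obtain ⟨y, hy⟩ := hh
    have key : (famSub p).ι.app (op V) (yonedaEquiv y.hom) =
        B.val.map h.op (yonedaEquiv x.hom) := by
      calc (famSub p).ι.app (op V) (yonedaEquiv y.hom)
          = yonedaEquiv (y.hom ≫ (famSub p).ι) := (yonedaEquiv_comp _ _).symm
        _ = yonedaEquiv (yoneda.map h ≫ x.hom) := by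
            exact congrArg yonedaEquiv (congrArg InducedCategory.Hom.hom hy)
        _ = B.val.map h.op (yonedaEquiv x.hom) := (yonedaEquiv_naturality _ _).symm
    have hmem : eSieve p (B.val.map h.op (yonedaEquiv x.hom)) ∈ J V := by
      rw [← key]
      exact (yonedaEquiv y.hom).2
    rwa [eSieve_pullback] at hmem
  · intro H
    refine J.superset_covering ?_ H
    rintro V h ⟨j, y, hy⟩
    exact ⟨y ≫ Limits.Sigma.ι A j, by rw [Category.assoc, Limits.Sigma.ι_desc, hy]⟩

lemma yo_hom_eq {U V : C} (x : yo J hs V ⟶ yo J hs U) :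
    x = yoMap J hs (yonedaEquiv x.hom) :=
  Sheaf.hom_ext (yonedaEquiv.injective (by
    show yonedaEquiv x.hom = yonedaEquiv (yoneda.map (yonedaEquiv x.hom))
    erw [yonedaEquiv_yoneda_map]))

lemma famSieve_yoMap {ι : Type u} {Ui : ι → C} {U : C} (ρ : ∀ i, Ui i ⟶ U) {V : C}
    (x : V ⟶ U) :
    famSieve hs (fun i => yoMap J hs (ρ i)) (yoMap J hs x) =
      (Sieve.generate (Presieve.ofArrows Ui ρ)).pullback x := by
  ext W h
  rw [mem_famSieve, Sieve.pullback_apply]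
  constructor
  · rintro ⟨i, y, hy⟩
    refine ⟨Ui i, yonedaEquiv y.hom, ρ i, Presieve.ofArrows.mk i, ?_⟩
    have := congrArg (fun (z : yo J hs W ⟶ yo J hs U) => yonedaEquiv z.hom) hy
    calc yonedaEquiv y.hom ≫ ρ i
        = (yoneda.map (ρ i)).app (op W) (yonedaEquiv y.hom) := rfl
      _ = yonedaEquiv (y.hom ≫ yoneda.map (ρ i)) := (yonedaEquiv_comp _ _).symm
      _ = yonedaEquiv (X := W) (F := yoneda.obj U) ((yoMap J hs h ≫ yoMap J hs x).hom) := this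
      _ = yonedaEquiv (yoneda.map (h ≫ x)) := by rw [← yoMap_comp]; rfl
      _ = h ≫ x := yonedaEquiv_yoneda_map _
  · rintro ⟨Z, w, g', hg', hcomp⟩
    cases hg' with
    | mk i =>
      refine ⟨i, yoMap J hs w, ?_⟩
      rw [← yoMap_comp, ← yoMap_comp, hcomp]

/-- A sieve is `P`-open if it is covering-equivalent to the sieve generated by a family of
`P`-morphisms. -/
def POpen (J' : GrothendieckTopology C) (P' : MorphismProperty C) {U : C} (S : Sieve U) :
    Prop :=
  ∃ (I : Type u) (Ui : I → C) (ρ : ∀ i, Ui i ⟶ U), (∀ i, P' (ρ i)) ∧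
    ∀ (V : C) (x : V ⟶ U),
      ((Sieve.generate (Presieve.ofArrows Ui ρ)).pullback x ∈ J' V ↔ S.pullback x ∈ J' V)

lemma isOpenImmersion_iff {F H : Sheaf J (Type u)} (f : F ⟶ H) :
    IsOpenImmersion J P hs f ↔
      Mono f ∧ ∀ (U : C) (g : yo J hs U ⟶ H), POpen J P (fSieve hs f g) := by
  constructor
  · intro hOI
    constructor
    · rw [mono_iff_yo hs]
      intro U x y hxy
      obtain ⟨hm, -⟩ := hOI U (x ≫ f)
      have h1 : pullback.lift x (𝟙 _) (by rw [Category.id_comp]) ≫ pullback.snd f (x ≫ f) =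
          pullback.lift y (𝟙 _) (by rw [hxy, Category.id_comp]) ≫ pullback.snd f (x ≫ f) := by
        rw [pullback.lift_snd, pullback.lift_snd]
      have h2 := (cancel_mono (pullback.snd f (x ≫ f))).mp h1
      have h3 := congrArg (fun z => z ≫ pullback.fst f (x ≫ f)) h2
      exact (pullback.lift_fst _ _ _).symm.trans (h3.trans (pullback.lift_fst _ _ _))
    · intro U g
      obtain ⟨hm, I', Ui', ρ, hρP, hSame⟩ := hOI U g
      refine ⟨I', Ui', ρ, hρP, ?_⟩
      intro V x
      have hiff := (sameImage_iff hs _ _).mp hSame V (yoMap J hs x)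
      rw [fSieve_desc_iff, famSieve_yoMap, fSieve_snd, ← fSieve_pullback] at hiff
      exact hiff
  · rintro ⟨hMono, hPO⟩
    intro U g
    haveI := hMono
    refine ⟨inferInstance, ?_⟩
    obtain ⟨I', Ui', ρ, hρP, hiff⟩ := hPO U g
    refine ⟨I', Ui', ρ, hρP, (sameImage_iff hs _ _).mpr ?_⟩
    intro V x
    obtain ⟨x', rfl⟩ : ∃ x', x = yoMap J hs x' := ⟨_, yo_hom_eq hs x⟩
    rw [fSieve_desc_iff, famSieve_yoMap, fSieve_snd, ← fSieve_pullback]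
    exact hiff V x'

lemma pOpen_local {U : C} (S' : Sieve U) {I₀ : Type u} {U₀ : I₀ → C} (ρ : ∀ j, U₀ j ⟶ U)
    (hρ : ∀ j, P (ρ j))
    (hcomp : ∀ ⦃V W Z : C⦄ (a : V ⟶ W) (b : W ⟶ Z), P a → P b → P (a ≫ b))
    (h1 : ∀ j, POpen J P (S'.pullback (ρ j)))
    (h2 : ∀ (V : C) (x : V ⟶ U), S'.pullback x ∈ J V →
      (Sieve.generate (Presieve.ofArrows U₀ ρ)).pullback x ∈ J V) :
    POpen J P S' := by
  choose I₁ V₁ σ hσP hσiff using h1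
  refine ⟨(j : I₀) × I₁ j, fun jk => V₁ jk.1 jk.2, fun jk => σ jk.1 jk.2 ≫ ρ jk.1,
    fun jk => hcomp _ _ (hσP _ _) (hρ _), ?_⟩
  intro V x
  constructor
  · intro hx
    refine J.transitive hx _ ?_
    rintro W h hh
    rw [Sieve.pullback_apply] at hh
    obtain ⟨Z, w, g', hg', hcomp'⟩ := hh
    cases hg' with
    | mk jk =>
      obtain ⟨j, k⟩ := jk
      have hgen : (Sieve.generate (Presieve.ofArrows (V₁ j) (σ j))).pullback
          (w ≫ σ j k) ∈ J W := by
        have hid : ((Sieve.generate (Presieve.ofArrows (V₁ j) (σ j))).pullback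
            (w ≫ σ j k)) (𝟙 W) := by
          rw [Sieve.pullback_apply]
          exact ⟨_, w, σ j k, Presieve.ofArrows.mk k, by rw [Category.id_comp]⟩
        rw [Sieve.id_mem_iff_eq_top.mp hid]
        exact J.top_mem _
      have hc := (hσiff j W (w ≫ σ j k)).mp hgen
      rw [← Sieve.pullback_comp] at hc
      rw [← Sieve.pullback_comp]
      rw [show (w ≫ σ j k) ≫ ρ j = h ≫ x from by rw [Category.assoc]; exact hcomp'] at hc
      exact hc
  · intro hS'
    have hρcov := h2 V x hS'
    have hboth := J.intersection_covering hρcov hS'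
    refine J.transitive hboth _ ?_
    rintro W h hh
    rw [Sieve.inter_apply] at hh
    obtain ⟨hh1, hh2⟩ := hh
    rw [Sieve.pullback_apply] at hh1 hh2
    obtain ⟨Z, w, g', hg', hcomp'⟩ := hh1
    cases hg' with
    | mk j =>
      have hcov : (S'.pullback (ρ j)).pullback w ∈ J W := by
        rw [← Sieve.pullback_comp, hcomp']
        have hid : (S'.pullback (h ≫ x)) (𝟙 W) := by
          rw [Sieve.pullback_apply, Category.id_comp]
          exact hh2
        rw [Sieve.id_mem_iff_eq_top.mp hid]
        exact J.top_mem _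
      have hgen := (hσiff j W w).mpr hcov
      refine J.superset_covering ?_ hgen
      rintro W' h' hh'
      rw [Sieve.pullback_apply] at hh'
      obtain ⟨Z', v, g'', hg'', hcomp''⟩ := hh'
      cases hg'' with
      | mk k =>
        rw [Sieve.pullback_apply, Sieve.pullback_apply, Sieve.generate_apply]
        refine ⟨_, v, σ j k ≫ ρ j, Presieve.ofArrows.mk (⟨j, k⟩ : (j : I₀) × I₁ j), ?_⟩
        rw [← Category.assoc, hcomp'', Category.assoc, hcomp', Category.assoc]

end Aux

end GeomCtx

open GeomCtx in
/-- If `X` is an elementary scheme admitting an open atlas `∐ h_{U_i} ⟶ X` such that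
each pullback `F ×_X h_{U_i}` is an elementary scheme, then `F` is an elementary
scheme. -/
theorem statement11 {C : Type u} [SmallCategory C] (J : GrothendieckTopology C)
    (P : MorphismProperty C) (hGC : IsGeometricContext J P)
    {F X : Sheaf J (Type u)} (f : F ⟶ X)
    {I : Type u} (Ui : I → C) (p : ∀ i, yo J hGC.subcanonical (Ui i) ⟶ X)
    (hOI : ∀ i, IsOpenImmersion J P hGC.subcanonical (p i))
    (hEpi : Epi (Limits.Sigma.desc p))
    (hPull : ∀ i, IsElementaryScheme J P hGC.subcanonical (pullback f (p i))) :
    IsElementaryScheme J P hGC.subcanonical F := by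
  classical
  have hs : Subcanonical J := hGC.subcanonical
  choose K Vik q hqOI hqEpi using hPull
  have hpChar := fun i => (isOpenImmersion_iff (P := P) hs (p i)).mp (hOI i)
  have hqChar := fun i k => (isOpenImmersion_iff (P := P) hs (q i k)).mp (hqOI i k)
  refine ⟨(i : I) × K i, fun ik => Vik ik.1 ik.2,
    fun ik => q ik.1 ik.2 ≫ pullback.fst f (p ik.1), ?_, ?_⟩
  · rintro ⟨i, k⟩
    rw [isOpenImmersion_iff (P := P) hs]
    haveI hmp : Mono (p i) := (hpChar i).1
    haveI hmq : Mono (q i k) := (hqChar i k).1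
    haveI hmfst : Mono (pullback.fst f (p i)) := inferInstance
    refine ⟨mono_comp _ _, ?_⟩
    intro U g
    set m := pullback.fst f (p i) with hm
    have hfst : fSieve hs m g = fSieve hs (p i) (g ≫ f) := fSieve_fst hs f (p i) g
    obtain ⟨I₀, U₀, ρ, hρP, hρiff⟩ := (hpChar i).2 U (g ≫ f)
    refine pOpen_local (J := J) P _ ρ hρP hGC.stableUnderComposition ?_ ?_
    · -- POpen of each pullback
      intro j
      have hmem : fSieve hs m (yoMap J hs (ρ j) ≫ g) ∈ J (U₀ j) := by
        have he : fSieve hs m (yoMap J hs (ρ j) ≫ g) = (fSieve hs m g).pullback (ρ j) :=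
          (fSieve_pullback hs m g (ρ j)).symm
        rw [he, hfst]
        refine (hρiff (U₀ j) (ρ j)).mp ?_
        have hid : ((Sieve.generate (Presieve.ofArrows U₀ ρ)).pullback (ρ j)) (𝟙 (U₀ j)) := by
          rw [Sieve.pullback_apply, Sieve.generate_apply]
          exact ⟨_, 𝟙 _, ρ j, Presieve.ofArrows.mk j, rfl⟩
        rw [Sieve.id_mem_iff_eq_top.mp hid]
        exact J.top_mem _
      obtain ⟨gj, hgj⟩ := factor_through_mono hs m (yoMap J hs (ρ j) ≫ g) hmem
      have hSeq : (fSieve hs (q i k ≫ m) g).pullback (ρ j) = fSieve hs (q i k) gj := by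
        rw [fSieve_pullback, ← hgj, fSieve_comp_cancel]
      rw [hSeq]
      exact (hqChar i k).2 (U₀ j) gj
    · -- the sieve lives under the base family
      intro V x hx
      refine (hρiff V x).mpr ?_
      rw [← hfst]
      refine J.superset_covering ?_ hx
      exact Sieve.pullback_monotone x (fSieve_comp_le hs (q i k) m g)
  · -- the atlas is jointly epimorphic
    rw [epi_desc_iff_famSieve hs]
    intro U x
    have h0 : famSieve hs p (x ≫ f) ∈ J U :=
      (epi_desc_iff_famSieve hs p).mp hEpi U (x ≫ f)
    refine J.transitive h0 _ ?_
    intro V h hh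
    obtain ⟨i, y, hy⟩ := hh
    have hcond : (yoMap J hs h ≫ x) ≫ f = y ≫ p i := by
      rw [hy, Category.assoc]
    have h1 : famSieve hs (q i) (pullback.lift (yoMap J hs h ≫ x) y hcond) ∈ J V :=
      (epi_desc_iff_famSieve hs (q i)).mp (hqEpi i) V _
    refine J.superset_covering ?_ h1
    rintro W h' ⟨k, z, hz⟩
    rw [Sieve.pullback_apply, mem_famSieve]
    refine ⟨⟨i, k⟩, ?_⟩
    rw [mem_fSieve]
    refine ⟨z, ?_⟩
    rw [← Category.assoc, hz, Category.assoc, pullback.lift_fst, ← Category.assoc, ← yoMap_comp]
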